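/- Let p ≥ 2. The set S = {ψ₀(γ) : γ ∈ (−1,1)} is a measurable cross section for the action of O_{p−1} × O_{p−1} on O_p⁺ = {ψ ∈ O_p : |ψ₁₁| < 1} given by (h₁,k₁)·ψ = diag(1,h₁) ψ diag(1,k₁)ᵀ: S is a Borel subset of O_p⁺ and the orbit of every ψ ∈ O_p⁺ intersects S in exactly one point, namely ψ₀(ψ₁₁). -/

import Mathlib

open MeasureTheory Matrix

/-- The (Borel = product) σ-algebra on real matrices. -/
instance matMeas (m n : ℕ) : MeasurableSpace (Matrix (Fin m) (Fin n) ℝ) := MeasurableSpace.pi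

/-- `μ` is the Haar probability distribution on the orthogonal group `O_p`, viewed as a Borel
probability measure on the space of `p × p` real matrices which is concentrated on the set of
orthogonal matrices and invariant under left and right translation by orthogonal matrices. -/
def IsHaarOrthogonal (p : ℕ) (μ : Measure (Matrix (Fin p) (Fin p) ℝ)) : Prop :=
  IsProbabilityMeasure μ ∧
  μ {A | A ∈ Matrix.orthogonalGroup (Fin p) ℝ} = 1 ∧
  (∀ g ∈ Matrix.orthogonalGroup (Fin p) ℝ, Measure.map (fun A => g * A) μ = μ) ∧
  (∀ g ∈ Matrix.orthogonalGroup (Fin p) ℝ, Measure.map (fun A => A * g) μ = μ)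

/-- The density `f(x|p) = Γ(p/2)/(Γ(1/2)Γ((p-1)/2)) (1-x²)^((p-3)/2)` on `(-1,1)`,
extended by `0` outside `(-1,1)`. -/
noncomputable def haarEntryDensity (p : ℕ) (x : ℝ) : ENNReal :=
  ENNReal.ofReal (if x ∈ Set.Ioo (-1 : ℝ) 1 then
    (Real.Gamma ((p : ℝ) / 2) / (Real.Gamma (1 / 2) * Real.Gamma (((p : ℝ) - 1) / 2))) *
      (1 - x ^ 2) ^ (((p : ℝ) - 3) / 2)
  else 0)

/-- `ν` is the uniform distribution on the unit sphere `S^{k-1} ⊆ ℝ^k`, viewed as the unique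
rotation-invariant Borel probability measure on `ℝ^k` concentrated on the unit sphere. -/
def IsUniformOnSphere (k : ℕ) (ν : Measure (EuclideanSpace ℝ (Fin k))) : Prop :=
  IsProbabilityMeasure ν ∧ ν {u | ‖u‖ = 1} = 1 ∧
  ∀ L : EuclideanSpace ℝ (Fin k) ≃ₗᵢ[ℝ] EuclideanSpace ℝ (Fin k), Measure.map L ν = ν

/-- The `(n+1) × (n+1)` block-diagonal matrix `diag(γ, Δ)` with scalar block `γ` and lower
block `Δ`. -/
def cornerBlock {n : ℕ} (γ : ℝ) (Δ : Matrix (Fin n) (Fin n) ℝ) :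
    Matrix (Fin (n + 1)) (Fin (n + 1)) ℝ :=
  Matrix.of fun i j =>
    if hi : i = 0 then (if j = 0 then γ else 0)
    else if hj : j = 0 then 0
    else Δ (i.pred hi) (j.pred hj)

/-- The matrix `ψ₀(γ)`: the `p × p` orthogonal matrix whose first row and first column both
equal `(γ, √(1-γ²), 0, …, 0)` and whose lower-right `(p-1) × (p-1)` block is
`diag(-γ, I_{p-2})` (here `p = n+2`). -/
noncomputable def psi0 (n : ℕ) (γ : ℝ) : Matrix (Fin (n + 2)) (Fin (n + 2)) ℝ :=
  Matrix.of fun i j =>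
    if i = 0 then (if j = 0 then γ else if j = 1 then Real.sqrt (1 - γ ^ 2) else 0)
    else if i = 1 then (if j = 0 then Real.sqrt (1 - γ ^ 2) else if j = 1 then -γ else 0)
    else if i = j then 1 else 0

/-- The reflection (Householder) matrix `I - 2 w wᵀ / (wᵀ w)`. -/
noncomputable def reflMatrix (p : ℕ) (w : Fin p → ℝ) : Matrix (Fin p) (Fin p) ℝ :=
  1 - (2 / (w ⬝ᵥ w)) • Matrix.vecMulVec w w


/-!
The entry `ψ₁₁` is invariant under the action, so the orbit of `ψ` meets `S` at most in
`ψ₀(ψ₁₁)`. Conversely, the tails of the first row and of the first column of `ψ` both have length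
`s = √(1 - ψ₁₁²)`, so Householder reflections `h, k ∈ O_{p-1}` move them onto `s e₁`; then
`N = diag(1,h) ψ diag(1,k)ᵀ` has the same first row and column as `ψ₀ = ψ₀(ψ₁₁)`. Hence `ψ₀ᵀ N`
fixes `e₁` and equals `diag(1, B)`, and comparing first rows (using `s ≠ 0`) shows that `B` fixes
`e₁` too, i.e. `N = ψ₀ diag(1, 1, D)`; absorbing `diag(1, D)` into `k` puts `ψ₀` in the orbit.
`S` is Borel as the intersection of the open set `{|A₁₁| < 1}` with the closed set
`{A = ψ₀(A₁₁)}`.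
-/

section Orthogonal

variable {m : ℕ}

lemma transpose_mem_orthogonalGroup {A : Matrix (Fin m) (Fin m) ℝ}
    (hA : A ∈ orthogonalGroup (Fin m) ℝ) : Aᵀ ∈ orthogonalGroup (Fin m) ℝ := by
  rw [mem_orthogonalGroup_iff', transpose_transpose]
  exact (mem_orthogonalGroup_iff _ _).mp hA

lemma mulVec_dotProduct_mulVec_of_mem_orthogonalGroup {A : Matrix (Fin m) (Fin m) ℝ}
    (hA : A ∈ orthogonalGroup (Fin m) ℝ) (x y : Fin m → ℝ) :
    (A *ᵥ x) ⬝ᵥ (A *ᵥ y) = x ⬝ᵥ y := by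
  rw [dotProduct_mulVec, ← mulVec_transpose, mulVec_mulVec,
    (mem_orthogonalGroup_iff' _ _).mp hA, one_mulVec]

lemma dotProduct_tail_tail (x y : Fin (m + 1) → ℝ) :
    Fin.tail x ⬝ᵥ Fin.tail y = x ⬝ᵥ y - x 0 * y 0 := by
  simp [dotProduct, Fin.sum_univ_succ, Fin.tail]

end Orthogonal

section Reflection

variable {m : ℕ}

lemma reflMatrix_transpose (w : Fin m → ℝ) : (reflMatrix m w)ᵀ = reflMatrix m w := by
  simp [reflMatrix]

lemma reflMatrix_mul_self {w : Fin m → ℝ} (hw : w ⬝ᵥ w ≠ 0) :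
    reflMatrix m w * reflMatrix m w = 1 := by
  have hc : 2 / (w ⬝ᵥ w) * (2 / (w ⬝ᵥ w) * (w ⬝ᵥ w)) = 2 / (w ⬝ᵥ w) + 2 / (w ⬝ᵥ w) := by
    rw [div_mul_cancel₀ 2 hw]; ring
  have hsq : vecMulVec w w * vecMulVec w w = (w ⬝ᵥ w) • vecMulVec w w := by
    rw [vecMulVec_mul_vecMulVec, vecMulVec_smul]
  simp only [reflMatrix, sub_mul, mul_sub, one_mul, mul_one, Matrix.smul_mul, Matrix.mul_smul,
    hsq, smul_smul, hc, add_smul]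
  abel

lemma reflMatrix_mem_orthogonalGroup {w : Fin m → ℝ} (hw : w ⬝ᵥ w ≠ 0) :
    reflMatrix m w ∈ orthogonalGroup (Fin m) ℝ := by
  rw [mem_orthogonalGroup_iff, reflMatrix_transpose, reflMatrix_mul_self hw]

lemma reflMatrix_mulVec (w u : Fin m → ℝ) :
    reflMatrix m w *ᵥ u = u - (2 / (w ⬝ᵥ w) * (w ⬝ᵥ u)) • w := by
  simp [reflMatrix, sub_mulVec, smul_mulVec, vecMulVec_mulVec, smul_smul]

lemma exists_mem_orthogonalGroup_mulVec_eq {u v : Fin m → ℝ} (h : u ⬝ᵥ u = v ⬝ᵥ v) :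
    ∃ H ∈ orthogonalGroup (Fin m) ℝ, H *ᵥ u = v := by
  by_cases huv : u = v
  · exact ⟨1, one_mem _, by rw [one_mulVec, huv]⟩
  set w := u - v
  have hw : w ⬝ᵥ w ≠ 0 := fun h0 => huv (sub_eq_zero.mp (dotProduct_self_eq_zero.mp h0))
  -- `‖u‖ = ‖v‖` makes the reflection in `(u - v)ᗮ` swap `u` and `v`
  have hwu : w ⬝ᵥ w = 2 * (w ⬝ᵥ u) := by
    simp only [w, sub_dotProduct, dotProduct_sub, dotProduct_comm v u, h]; ring
  refine ⟨reflMatrix m w, reflMatrix_mem_orthogonalGroup hw, ?_⟩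
  have hc : 2 / (w ⬝ᵥ w) * (w ⬝ᵥ u) = 1 := by
    have hwu₀ : w ⬝ᵥ u ≠ 0 := right_ne_zero_of_mul (hwu ▸ hw)
    rw [hwu]; field_simp
  rw [reflMatrix_mulVec, hc, one_smul, sub_sub_cancel]

end Reflection

section CornerBlock

variable {n : ℕ}

@[simp]
lemma cornerBlock_zero_zero (γ : ℝ) (Δ : Matrix (Fin n) (Fin n) ℝ) : cornerBlock γ Δ 0 0 = γ := by
  simp [cornerBlock]

@[simp]
lemma cornerBlock_zero_succ (γ : ℝ) (Δ : Matrix (Fin n) (Fin n) ℝ) (j : Fin n) :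
    cornerBlock γ Δ 0 j.succ = 0 := by
  simp [cornerBlock]

@[simp]
lemma cornerBlock_succ_zero (γ : ℝ) (Δ : Matrix (Fin n) (Fin n) ℝ) (i : Fin n) :
    cornerBlock γ Δ i.succ 0 = 0 := by
  simp [cornerBlock]

@[simp]
lemma cornerBlock_succ_succ (γ : ℝ) (Δ : Matrix (Fin n) (Fin n) ℝ) (i j : Fin n) :
    cornerBlock γ Δ i.succ j.succ = Δ i j := by
  simp [cornerBlock]

lemma cornerBlock_transpose (γ : ℝ) (Δ : Matrix (Fin n) (Fin n) ℝ) :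
    (cornerBlock γ Δ)ᵀ = cornerBlock γ Δᵀ := by
  ext i j
  cases i using Fin.cases <;> cases j using Fin.cases <;> simp

lemma cornerBlock_mul (γ γ' : ℝ) (Δ Δ' : Matrix (Fin n) (Fin n) ℝ) :
    cornerBlock γ Δ * cornerBlock γ' Δ' = cornerBlock (γ * γ') (Δ * Δ') := by
  ext i j
  cases i using Fin.cases <;> cases j using Fin.cases <;> simp [mul_apply, Fin.sum_univ_succ]

lemma cornerBlock_one_one : cornerBlock 1 (1 : Matrix (Fin n) (Fin n) ℝ) = 1 := by
  ext i j
  cases i using Fin.cases <;> cases j using Fin.cases <;>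
    simp [one_apply, (Fin.succ_ne_zero _).symm]

lemma cornerBlock_injective (γ : ℝ) : Function.Injective (cornerBlock (n := n) γ) :=
  fun Δ Δ' h => ext fun i j => by simpa using congrFun (congrFun h i.succ) j.succ

lemma cornerBlock_mulVec_cons (γ x : ℝ) (Δ : Matrix (Fin n) (Fin n) ℝ) (v : Fin n → ℝ) :
    cornerBlock γ Δ *ᵥ Fin.cons x v = Fin.cons (γ * x) (Δ *ᵥ v) := by
  ext i
  cases i using Fin.cases <;> simp [mulVec, dotProduct, Fin.sum_univ_succ]

lemma cornerBlock_one_mem_orthogonalGroup_iff {Δ : Matrix (Fin n) (Fin n) ℝ} :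
    cornerBlock 1 Δ ∈ orthogonalGroup (Fin (n + 1)) ℝ ↔ Δ ∈ orthogonalGroup (Fin n) ℝ := by
  simp only [mem_orthogonalGroup_iff', cornerBlock_transpose, cornerBlock_mul, mul_one,
    ← cornerBlock_one_one, (cornerBlock_injective 1).eq_iff]

lemma exists_eq_cornerBlock_of_mulVec_single {A : Matrix (Fin (n + 1)) (Fin (n + 1)) ℝ}
    (hA : A ∈ orthogonalGroup (Fin (n + 1)) ℝ) (hA₀ : A *ᵥ Pi.single 0 1 = Pi.single 0 1) :
    ∃ B ∈ orthogonalGroup (Fin n) ℝ, A = cornerBlock 1 B := by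
  have hAt₀ : Aᵀ *ᵥ Pi.single 0 1 = Pi.single 0 1 := by
    conv_lhs => rw [← hA₀, mulVec_mulVec, (mem_orthogonalGroup_iff' _ _).mp hA, one_mulVec]
  have hA_eq : A = cornerBlock 1 (A.submatrix Fin.succ Fin.succ) := by
    ext i j
    rw [mulVec_single_one] at hA₀ hAt₀
    cases i using Fin.cases <;> cases j using Fin.cases
    · simpa using congrFun hA₀ 0
    · simpa using (congrFun hAt₀ _).trans (Pi.single_eq_of_ne (Fin.succ_ne_zero _) _)
    · simpa using (congrFun hA₀ _).trans (Pi.single_eq_of_ne (Fin.succ_ne_zero _) _)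
    · simp
  exact ⟨_, cornerBlock_one_mem_orthogonalGroup_iff.mp (hA_eq ▸ hA), hA_eq⟩

lemma cornerBlock_one_mulVec_single_zero (Δ : Matrix (Fin n) (Fin n) ℝ) :
    cornerBlock 1 Δ *ᵥ Pi.single 0 1 = Pi.single 0 1 := by
  ext i
  cases i using Fin.cases <;> simp [mulVec, dotProduct, Fin.sum_univ_succ]

lemma exists_cornerBlock_mulVec_eq {x y : Fin (n + 1) → ℝ} (hxy : x ⬝ᵥ x = y ⬝ᵥ y)
    (h₀ : x 0 = y 0) : ∃ k ∈ orthogonalGroup (Fin n) ℝ, cornerBlock 1 k *ᵥ x = y := by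
  obtain ⟨k, hk, hkx⟩ := exists_mem_orthogonalGroup_mulVec_eq (u := Fin.tail x) (v := Fin.tail y)
    (by rw [dotProduct_tail_tail, dotProduct_tail_tail, hxy, h₀])
  refine ⟨k, hk, ?_⟩
  rw [← Fin.cons_self_tail x, ← Fin.cons_self_tail y, cornerBlock_mulVec_cons, hkx, one_mul]
  simp [h₀]

lemma exists_eq_mul_cornerBlock_of_mulVec_single_eq {P N : Matrix (Fin (n + 1)) (Fin (n + 1)) ℝ}
    (hP : P ∈ orthogonalGroup (Fin (n + 1)) ℝ) (hN : N ∈ orthogonalGroup (Fin (n + 1)) ℝ)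
    (h : N *ᵥ Pi.single 0 1 = P *ᵥ Pi.single 0 1) :
    ∃ B ∈ orthogonalGroup (Fin n) ℝ, N = P * cornerBlock 1 B := by
  obtain ⟨B, hB, hPN⟩ := exists_eq_cornerBlock_of_mulVec_single
    (mul_mem (transpose_mem_orthogonalGroup hP) hN)
    (by rw [← mulVec_mulVec, h, mulVec_mulVec, (mem_orthogonalGroup_iff' _ _).mp hP, one_mulVec])
  refine ⟨B, hB, ?_⟩
  rw [← hPN, ← mul_assoc, (mem_orthogonalGroup_iff _ _).mp hP, one_mul]

lemma cornerBlock_one_mul_mul_transpose_zero_zero (h k : Matrix (Fin n) (Fin n) ℝ)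
    (ψ : Matrix (Fin (n + 1)) (Fin (n + 1)) ℝ) :
    (cornerBlock 1 h * ψ * (cornerBlock 1 k)ᵀ) 0 0 = ψ 0 0 := by
  simp [mul_apply, Fin.sum_univ_succ, cornerBlock_transpose]

end CornerBlock

section Psi0

variable {n : ℕ}

@[simp]
lemma psi0_zero_zero (γ : ℝ) : psi0 n γ 0 0 = γ := by
  simp [psi0]

lemma psi0_transpose (γ : ℝ) : (psi0 n γ)ᵀ = psi0 n γ := by
  rw [← Matrix.ext_iff]
  simp [Fin.forall_fin_succ, psi0, Fin.succ_ne_zero, Fin.succ_succ_ne_one, eq_comm]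

lemma psi0_row_zero (γ : ℝ) :
    psi0 n γ 0 = Fin.cons γ (Real.sqrt (1 - γ ^ 2) • Pi.single 0 1) := by
  ext j
  cases j using Fin.cases with
  | zero => simp
  | succ j => cases j using Fin.cases <;> simp [psi0, Fin.succ_succ_ne_one]

lemma psi0_mul_self {γ : ℝ} (hγ : γ ^ 2 ≤ 1) : psi0 n γ * psi0 n γ = 1 := by
  have hs := Real.mul_self_sqrt (sub_nonneg.mpr hγ)
  rw [← Matrix.ext_iff]
  simp only [Fin.forall_fin_succ]
  simp [psi0, mul_apply, Fin.sum_univ_succ, one_apply, Fin.succ_ne_zero, Fin.succ_succ_ne_one,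
    (Fin.succ_ne_zero _).symm, (Fin.succ_succ_ne_one _).symm, hs]
  exact ⟨⟨by ring, by ring⟩, by ring, by ring⟩

lemma psi0_mem_orthogonalGroup {γ : ℝ} (hγ : γ ^ 2 ≤ 1) :
    psi0 n γ ∈ orthogonalGroup (Fin (n + 2)) ℝ := by
  rw [mem_orthogonalGroup_iff, psi0_transpose, psi0_mul_self hγ]

lemma psi0_mulVec_single_zero (γ : ℝ) :
    psi0 n γ *ᵥ Pi.single 0 1 = Fin.cons γ (Real.sqrt (1 - γ ^ 2) • Pi.single 0 1) := by
  rw [mulVec_single_one, col, psi0_transpose, psi0_row_zero]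

lemma exists_eq_psi0_mul_cornerBlock {N : Matrix (Fin (n + 2)) (Fin (n + 2)) ℝ} {γ : ℝ}
    (hN : N ∈ orthogonalGroup (Fin (n + 2)) ℝ) (hγ : |γ| < 1)
    (hcol : N *ᵥ Pi.single 0 1 = psi0 n γ *ᵥ Pi.single 0 1)
    (hrow : Nᵀ *ᵥ Pi.single 0 1 = psi0 n γ *ᵥ Pi.single 0 1) :
    ∃ D ∈ orthogonalGroup (Fin n) ℝ, N = psi0 n γ * cornerBlock 1 (cornerBlock 1 D) := by
  have hγ₂ : γ ^ 2 < 1 := sq_lt_one_iff_abs_lt_one γ |>.mpr hγ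
  have hs : Real.sqrt (1 - γ ^ 2) ≠ 0 := (Real.sqrt_pos.mpr (by linarith)).ne'
  obtain ⟨B, hB, rfl⟩ := exists_eq_mul_cornerBlock_of_mulVec_single_eq
    (psi0_mem_orthogonalGroup hγ₂.le) hN hcol
  have hBt : Bᵀ *ᵥ Pi.single 0 1 = Pi.single 0 1 := by
    rw [transpose_mul, ← mulVec_mulVec, psi0_transpose, psi0_mulVec_single_zero,
      cornerBlock_transpose, cornerBlock_mulVec_cons, one_mul] at hrow
    exact smul_right_injective _ hs (by simpa [mulVec_smul] using Fin.cons_right_injective _ hrow)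
  obtain ⟨C, hC, hBC⟩ :=
    exists_eq_cornerBlock_of_mulVec_single (transpose_mem_orthogonalGroup hB) hBt
  refine ⟨Cᵀ, transpose_mem_orthogonalGroup hC, ?_⟩
  rw [← cornerBlock_transpose, ← hBC, transpose_transpose]

lemma exists_cornerBlock_mul_mul_cornerBlock_transpose_eq_psi0
    {ψ : Matrix (Fin (n + 2)) (Fin (n + 2)) ℝ} (hψ : ψ ∈ orthogonalGroup (Fin (n + 2)) ℝ)
    (hψ₀ : |ψ 0 0| < 1) :
    ∃ h k : Matrix (Fin (n + 1)) (Fin (n + 1)) ℝ, h ∈ orthogonalGroup (Fin (n + 1)) ℝ ∧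
      k ∈ orthogonalGroup (Fin (n + 1)) ℝ ∧
      psi0 n (ψ 0 0) = cornerBlock 1 h * ψ * (cornerBlock 1 k)ᵀ := by
  set e : Fin (n + 2) → ℝ := Pi.single 0 1
  set p := psi0 n (ψ 0 0) *ᵥ e
  have hp := psi0_mem_orthogonalGroup (n := n) ((sq_lt_one_iff_abs_lt_one _).mpr hψ₀).le
  have hp₀ : p 0 = ψ 0 0 := by simp [p, e]
  have hnorm {A : Matrix (Fin (n + 2)) (Fin (n + 2)) ℝ} (hA : A ∈ orthogonalGroup (Fin (n + 2)) ℝ) :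
      (A *ᵥ e) ⬝ᵥ (A *ᵥ e) = p ⬝ᵥ p := by
    rw [mulVec_dotProduct_mulVec_of_mem_orthogonalGroup hA,
      mulVec_dotProduct_mulVec_of_mem_orthogonalGroup hp]
  obtain ⟨h, hh, hhψ⟩ := exists_cornerBlock_mulVec_eq (hnorm hψ) (by simp [e, hp₀])
  obtain ⟨k, hk, hkψ⟩ := exists_cornerBlock_mulVec_eq (hnorm (transpose_mem_orthogonalGroup hψ))
    (by simp [e, hp₀])
  set N := cornerBlock 1 h * ψ * (cornerBlock 1 k)ᵀ
  have hN : N ∈ orthogonalGroup (Fin (n + 2)) ℝ :=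
    mul_mem (mul_mem (cornerBlock_one_mem_orthogonalGroup_iff.mpr hh) hψ)
      (transpose_mem_orthogonalGroup (cornerBlock_one_mem_orthogonalGroup_iff.mpr hk))
  have hcol : N *ᵥ e = p := by
    simp only [N, ← mulVec_mulVec, cornerBlock_transpose, cornerBlock_one_mulVec_single_zero, e,
      hhψ]
  have hrow : Nᵀ *ᵥ e = p := by
    simp only [N, transpose_mul, transpose_transpose, ← mulVec_mulVec, cornerBlock_transpose,
      cornerBlock_one_mulVec_single_zero, e, hkψ]
  obtain ⟨D, hD, hND⟩ := exists_eq_psi0_mul_cornerBlock hN hψ₀ hcol hrow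
  have hQ : cornerBlock 1 (cornerBlock 1 D) ∈ orthogonalGroup (Fin (n + 2)) ℝ :=
    cornerBlock_one_mem_orthogonalGroup_iff.mpr (cornerBlock_one_mem_orthogonalGroup_iff.mpr hD)
  refine ⟨h, cornerBlock 1 D * k, hh,
    mul_mem (cornerBlock_one_mem_orthogonalGroup_iff.mpr hD) hk, ?_⟩
  calc psi0 n (ψ 0 0) = N * (cornerBlock 1 (cornerBlock 1 D))ᵀ := by
        rw [hND, mul_assoc, (mem_orthogonalGroup_iff _ _).mp hQ, mul_one]
    _ = _ := by
        simp only [N, transpose_mul, cornerBlock_transpose, cornerBlock_mul, mul_assoc, one_mul]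

lemma continuous_psi0 (n : ℕ) : Continuous (psi0 n) :=
  continuous_pi fun i => continuous_pi fun j => by
    simp only [psi0, of_apply]
    split_ifs <;> fun_prop

lemma measurableSet_setOf_eq_psi0 (n : ℕ) :
    MeasurableSet {A : Matrix (Fin (n + 2)) (Fin (n + 2)) ℝ |
      ∃ γ ∈ Set.Ioo (-1 : ℝ) 1, A = psi0 n γ} := by
  have : BorelSpace (Matrix (Fin (n + 2)) (Fin (n + 2)) ℝ) :=
    inferInstanceAs (BorelSpace (Fin (n + 2) → Fin (n + 2) → ℝ))
  have hentry : Continuous fun A : Matrix (Fin (n + 2)) (Fin (n + 2)) ℝ => A 0 0 := by fun_prop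
  have hS : {A : Matrix (Fin (n + 2)) (Fin (n + 2)) ℝ | ∃ γ ∈ Set.Ioo (-1 : ℝ) 1, A = psi0 n γ} =
      (fun A => A 0 0) ⁻¹' Set.Ioo (-1) 1 ∩ {A | A = psi0 n (A 0 0)} := by
    ext A
    constructor
    · rintro ⟨γ, hγ, rfl⟩
      simpa using hγ
    · rintro ⟨hA, hA'⟩
      exact ⟨_, hA, hA'⟩
  rw [hS]
  exact (isOpen_Ioo.preimage hentry).measurableSet.inter
    (isClosed_eq continuous_id ((continuous_psi0 n).comp hentry)).measurableSet

end Psi0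

/-- Proposition 2.3.  Let `p = n+2 ≥ 2`.  The set
`S = {ψ₀(γ) : γ ∈ (-1,1)}` is a measurable cross section for the action
`(h₁,k₁)·ψ = diag(1,h₁) ψ diag(1,k₁)ᵀ` of `O_{p-1} × O_{p-1}` on
`O_p⁺ = {ψ ∈ O_p : |ψ₁₁| < 1}`: `S` is a Borel subset of `O_p⁺`, and the orbit of each
`ψ ∈ O_p⁺` meets `S` in exactly one point, namely `ψ₀(ψ₁₁)`. -/
theorem cross_section_measurable_and_unique (n : ℕ) :
    MeasurableSet {A : Matrix (Fin (n + 2)) (Fin (n + 2)) ℝ |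
        ∃ γ ∈ Set.Ioo (-1 : ℝ) 1, A = psi0 n γ} ∧
    {A : Matrix (Fin (n + 2)) (Fin (n + 2)) ℝ | ∃ γ ∈ Set.Ioo (-1 : ℝ) 1, A = psi0 n γ}
      ⊆ {A | A ∈ Matrix.orthogonalGroup (Fin (n + 2)) ℝ ∧ |A 0 0| < 1} ∧
    ∀ ψ : Matrix (Fin (n + 2)) (Fin (n + 2)) ℝ,
      ψ ∈ Matrix.orthogonalGroup (Fin (n + 2)) ℝ → |ψ 0 0| < 1 →
      {A : Matrix (Fin (n + 2)) (Fin (n + 2)) ℝ |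
          (∃ h₁ k₁ : Matrix (Fin (n + 1)) (Fin (n + 1)) ℝ,
            h₁ ∈ Matrix.orthogonalGroup (Fin (n + 1)) ℝ ∧
            k₁ ∈ Matrix.orthogonalGroup (Fin (n + 1)) ℝ ∧
            A = cornerBlock 1 h₁ * ψ * (cornerBlock 1 k₁)ᵀ) ∧
          ∃ γ ∈ Set.Ioo (-1 : ℝ) 1, A = psi0 n γ}
        = {psi0 n (ψ 0 0)} := by
  refine ⟨measurableSet_setOf_eq_psi0 n, ?_, fun ψ hψ hψ₀ => ?_⟩
  · rintro _ ⟨γ, hγ, rfl⟩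
    have hγ' : |γ| < 1 := abs_lt.mpr hγ
    exact ⟨psi0_mem_orthogonalGroup ((sq_lt_one_iff_abs_lt_one γ).mpr hγ').le, by simpa using hγ'⟩
  · ext A
    constructor
    · rintro ⟨⟨h₁, k₁, -, -, hA⟩, γ, -, rfl⟩
      rw [Set.mem_singleton_iff, ← cornerBlock_one_mul_mul_transpose_zero_zero h₁ k₁ ψ, ← hA,
        psi0_zero_zero]
    · rintro rfl
      obtain ⟨h₁, k₁, hh, hk, hψ₁⟩ :=
        exists_cornerBlock_mul_mul_cornerBlock_transpose_eq_psi0 hψ hψ₀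
      exact ⟨⟨h₁, k₁, hh, hk, hψ₁⟩, ψ 0 0, abs_lt.mp hψ₀, rfl⟩
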